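/- Suppose: (i) the test with confidence regions (𝓕_N) is c-consistent for F, and almost surely the empirical distribution F̂_N = (1/N)Σ_{i=1}^N δ_{ξ^i} belongs to 𝓕_N for every N; (ii) c is equicontinuous in x over Ξ and c(x;·) is continuous on Ξ for each x, with c(x;·) integrable under F and under every measure in every 𝓕_N; (iii) X is closed and either X is bounded, or there is a Borel set D ⊆ Ξ with F(D) > 0 such that c(x;ξ) → ∞ as ‖x‖ → ∞ uniformly over ξ ∈ D and liminf_{‖x‖→∞} inf_{ξ∉D} c(x;ξ) > −∞; (iv) either Ξ is bounded, or there exists a continuous φ : Ξ → [0,∞) such that almost surely sup_{F₀∈𝓕_N} |E_{F₀}[φ(ξ)] − (1/N)Σ_{i=1}^N φ(ξ^i)| → 0 and, for each x ∈ X, |c(x;ξ)| = O(φ(ξ)). Then almost surely: (1) sup_{x∈K} |C(x;𝓕_N) − E_F[c(x;ξ)]| → 0 for every compact K ⊆ X; (2) inf_{x∈X} C(x;𝓕_N) → inf_{x∈X} E_F[c(x;ξ)]; (3) every sequence (x_N) with x_N ∈ argmin_{x∈X} C(x;𝓕_N) has at least one limit point, and all of its limit points lie in argmin_{x∈X} E_F[c(x;ξ)].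 -/

import Mathlib

open MeasureTheory Filter Topology
open scoped ENNReal

/-- The worst-case expected cost `C(x;𝓕) = sup_{F₀ ∈ 𝓕} E_{F₀}[c(x;ξ)]`,
as an extended real number, over a set of (bundled) probability measures. -/
noncomputable def worstCaseP {d dx : ℕ}
    (c : EuclideanSpace ℝ (Fin dx) → EuclideanSpace ℝ (Fin d) → ℝ)
    (𝓕 : Set (ProbabilityMeasure (EuclideanSpace ℝ (Fin d))))
    (x : EuclideanSpace ℝ (Fin dx)) : EReal :=
  ⨆ F₀ ∈ 𝓕, ((∫ ξ, c x ξ ∂F₀.toMeasure : ℝ) : EReal)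

/-- The empirical measure `(1/N) ∑_{i<N} δ_{ξ^i}` of the first `N` data points. -/
noncomputable def empiricalMeasure {d : ℕ} (N : ℕ)
    (ξ : ℕ → EuclideanSpace ℝ (Fin d)) : Measure (EuclideanSpace ℝ (Fin d)) :=
  ((N : ℝ≥0∞))⁻¹ • ∑ i ∈ Finset.range N, Measure.dirac (ξ i)

/-!
Applying c-consistency to a sequence that picks from each `𝓕_N` an element violating a given
accuracy, whenever there is one, shows that for each fixed `x` the expectation `E_G[c(x;ξ)]`
tends to `E_F[c(x;ξ)]` uniformly over `G ∈ 𝓕_N`. Equicontinuity in `x` makes this uniform on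
compact sets, which gives (1). Conclusions (2) and (3) follow once, outside a fixed compact set
`K`, both `E_F[c(·;ξ)]` and eventually `C(·;𝓕_N)` stay above a level `b` that `E_F[c(·;ξ)]`
undercuts inside `K`. For bounded `X` take `K = X`. In the coercive case `K` is `X` cut down to a
large ball: by the strong law the empirical mass of `D` eventually exceeds `F(D)/2`, and since the
empirical distribution lies in `𝓕_N`, the coercivity of `c` on `D` pushes `C(x;𝓕_N)` above `b`
off the ball.
-/

section Integrals

variable {E : Type*} [MeasurableSpace E] {μ : Measure E} [IsProbabilityMeasure μ] {Ξ : Set E}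

lemma abs_integral_sub_integral_le (hΞ : μ Ξᶜ = 0) {g h : E → ℝ} (hg : Integrable g μ)
    (hh : Integrable h μ) {ε : ℝ} (hgh : ∀ ζ ∈ Ξ, |g ζ - h ζ| ≤ ε) :
    |∫ ζ, g ζ ∂μ - ∫ ζ, h ζ ∂μ| ≤ ε := by
  rw [← integral_sub hg hh]
  calc |∫ ζ, g ζ - h ζ ∂μ| ≤ ∫ ζ, |g ζ - h ζ| ∂μ := abs_integral_le_integral_abs
    _ ≤ ∫ _, ε ∂μ :=
        integral_mono_ae (hg.sub hh).abs (integrable_const ε) ((ae_iff.2 hΞ).mono hgh)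
    _ = ε := by simp

lemma add_mul_le_integral (hΞ : μ Ξᶜ = 0) {D : Set E} (hD : MeasurableSet D) {g : E → ℝ}
    (hg : Integrable g μ) {m M β : ℝ} (hmM : m ≤ M) (hβ : β ≤ μ.real D)
    (hgD : ∀ ζ ∈ D, M ≤ g ζ) (hgΞ : ∀ ζ ∈ Ξ \ D, m ≤ g ζ) :
    m + (M - m) * β ≤ ∫ ζ, g ζ ∂μ := by
  have hlow : ∀ ζ ∈ Ξ, m + (M - m) * D.indicator (1 : E → ℝ) ζ ≤ g ζ := by
    intro ζ hζ
    by_cases hζD : ζ ∈ D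
    · simpa [hζD] using hgD ζ hζD
    · simpa [hζD] using hgΞ ζ ⟨hζ, hζD⟩
  have hind : Integrable (D.indicator (1 : E → ℝ)) μ := (integrable_const 1).indicator hD
  calc m + (M - m) * β ≤ m + (M - m) * μ.real D := by gcongr
    _ = ∫ ζ, m + (M - m) * D.indicator (1 : E → ℝ) ζ ∂μ := by
        rw [integral_add (integrable_const m) (hind.const_mul (M - m)),
          integral_const_mul, integral_indicator_one hD]
        simp
    _ ≤ ∫ ζ, g ζ ∂μ :=
        integral_mono_ae ((integrable_const m).add (hind.const_mul (M - m)))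
          hg ((ae_iff.2 hΞ).mono hlow)

end Integrals

lemma ProbabilityTheory.ae_tendsto_frequency {Ω E : Type*} [MeasurableSpace Ω]
    [MeasurableSpace E] {P : Measure Ω} {ξ : ℕ → Ω → E} (hξ : ∀ i, Measurable (ξ i))
    (hiid : iIndepFun ξ P) {μ : Measure E} [IsFiniteMeasure μ] (hdist : ∀ i, P.map (ξ i) = μ)
    {D : Set E} (hD : MeasurableSet D) :
    ∀ᵐ ω ∂P, Tendsto (fun N : ℕ => ((∑ i ∈ Finset.range N, D.indicator 1 (ξ i ω)) / N : ℝ))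
      atTop (𝓝 (μ.real D)) := by
  have hmeas : Measurable (D.indicator (1 : E → ℝ)) := measurable_const.indicator hD
  have hlaw := strong_law_ae_real (fun i ω => D.indicator (1 : E → ℝ) (ξ i ω))
    ((integrable_map_measure hmeas.aestronglyMeasurable (hξ 0).aemeasurable).1
      (by rw [hdist 0]; exact (integrable_const 1).indicator hD))
    (fun i j hij => (hiid.indepFun hij).comp hmeas hmeas)
    (fun i => (IdentDistrib.mk (hξ i).aemeasurable (hξ 0).aemeasurable
      (by rw [hdist i, hdist 0])).comp hmeas)
  have hmean : ∫ ω, D.indicator (1 : E → ℝ) (ξ 0 ω) ∂P = μ.real D := by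
    rw [← integral_map (hξ 0).aemeasurable hmeas.aestronglyMeasurable, hdist 0,
      integral_indicator_one hD]
  simpa only [hmean] using hlaw

section Empirical

variable {d : ℕ}

lemma integral_empiricalMeasure (N : ℕ) (ξs : ℕ → EuclideanSpace ℝ (Fin d))
    (g : EuclideanSpace ℝ (Fin d) → ℝ) :
    ∫ ζ, g ζ ∂empiricalMeasure N ξs = (∑ i ∈ Finset.range N, g (ξs i)) / N := by
  rw [empiricalMeasure, integral_smul_measure,
    integral_finsetSum_measure fun i _ => integrable_dirac enorm_lt_top]
  simp [integral_dirac, div_eq_inv_mul]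

lemma empiricalMeasure_real (N : ℕ) (ξs : ℕ → EuclideanSpace ℝ (Fin d))
    {D : Set (EuclideanSpace ℝ (Fin d))} (hD : MeasurableSet D) :
    (empiricalMeasure N ξs).real D = (∑ i ∈ Finset.range N, D.indicator 1 (ξs i)) / N := by
  rw [← integral_indicator_one hD, integral_empiricalMeasure]

lemma ae_tendsto_empiricalMeasure_real {Ω : Type*} [MeasurableSpace Ω] {P : Measure Ω}
    {ξ : ℕ → Ω → EuclideanSpace ℝ (Fin d)} (hξ : ∀ i, Measurable (ξ i))
    (hiid : ProbabilityTheory.iIndepFun ξ P) {μ : Measure (EuclideanSpace ℝ (Fin d))}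
    [IsFiniteMeasure μ] (hdist : ∀ i, P.map (ξ i) = μ) {D : Set (EuclideanSpace ℝ (Fin d))}
    (hD : MeasurableSet D) :
    ∀ᵐ ω ∂P, Tendsto (fun N => (empiricalMeasure N (ξ · ω)).real D) atTop (𝓝 (μ.real D)) := by
  simpa only [empiricalMeasure_real _ _ hD] using
    ProbabilityTheory.ae_tendsto_frequency hξ hiid hdist hD

end Empirical

section WorstCase

variable {d dx : ℕ} {c : EuclideanSpace ℝ (Fin dx) → EuclideanSpace ℝ (Fin d) → ℝ}
  {𝓖 : Set (ProbabilityMeasure (EuclideanSpace ℝ (Fin d)))} {x : EuclideanSpace ℝ (Fin dx)}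

lemma integral_le_worstCaseP {G : ProbabilityMeasure (EuclideanSpace ℝ (Fin d))} (hG : G ∈ 𝓖) :
    ((∫ ζ, c x ζ ∂G.toMeasure : ℝ) : EReal) ≤ worstCaseP c 𝓖 x :=
  le_iSup₂ (f := fun G _ => ((∫ ζ, c x ζ ∂G.toMeasure : ℝ) : EReal)) G hG

lemma worstCaseP_le_coe {b : ℝ} (h : ∀ G ∈ 𝓖, ∫ ζ, c x ζ ∂G.toMeasure ≤ b) :
    worstCaseP c 𝓖 x ≤ b :=
  iSup₂_le fun G hG => EReal.coe_le_coe_iff.2 (h G hG)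

lemma worstCaseP_mem_Icc (h𝓖 : 𝓖.Nonempty) {r ε : ℝ}
    (h : ∀ G ∈ 𝓖, |∫ ζ, c x ζ ∂G.toMeasure - r| ≤ ε) :
    worstCaseP c 𝓖 x ∈ Set.Icc ((r - ε : ℝ) : EReal) ((r + ε : ℝ) : EReal) := by
  obtain ⟨G, hG⟩ := h𝓖
  refine ⟨le_trans ?_ (integral_le_worstCaseP hG), worstCaseP_le_coe fun G hG => ?_⟩
  · exact EReal.coe_le_coe_iff.2 (by linarith [(abs_le.1 (h G hG)).1])
  · linarith [(abs_le.1 (h G hG)).2]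

end WorstCase

lemma EReal.tendsto_coe_of_forall_pos {β : Type*} {l : Filter β} {u : β → EReal} {r : ℝ}
    (h : ∀ ε > (0 : ℝ), ∀ᶠ n in l, ((r - ε : ℝ) : EReal) ≤ u n ∧ u n ≤ ((r + ε : ℝ) : EReal)) :
    Tendsto u l (𝓝 (r : EReal)) := by
  refine tendsto_order.2 ⟨fun a ha => ?_, fun a ha => ?_⟩
  · obtain ⟨s, has, hsr⟩ := EReal.lt_iff_exists_real_btwn.1 ha
    have hε : (0 : ℝ) < r - s := _root_.sub_pos.2 (EReal.coe_lt_coe_iff.1 hsr)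
    filter_upwards [h _ hε] with n hn
    exact has.trans_le (by simpa using hn.1)
  · obtain ⟨s, hrs, hsa⟩ := EReal.lt_iff_exists_real_btwn.1 ha
    have hε : (0 : ℝ) < s - r := _root_.sub_pos.2 (EReal.coe_lt_coe_iff.1 hrs)
    filter_upwards [h _ hε] with n hn
    exact (by simpa using hn.2 : u n ≤ s).trans_lt hsa

def TendstoUniformlyOnEReal {α : Type*} (W : ℕ → α → EReal) (f : α → ℝ) (K : Set α) : Prop :=
  ∀ ε > (0 : ℝ), ∀ᶠ N in atTop, ∀ x ∈ K,
    ((f x - ε : ℝ) : EReal) ≤ W N x ∧ W N x ≤ ((f x + ε : ℝ) : EReal)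

lemma IsCompact.eventually_forall_abs_sub_le {α ι β : Type*} [TopologicalSpace α] {K : Set α}
    (hK : IsCompact K) {l : Filter β} {S : β → Set ι} {u : ι → α → ℝ} {f : α → ℝ}
    (hpt : ∀ x ∈ K, ∀ ε > (0 : ℝ), ∀ᶠ N in l, ∀ i ∈ S N, |u i x - f x| ≤ ε)
    (hequi : ∀ x ∈ K, ∀ ε > (0 : ℝ), ∀ᶠ y in 𝓝 x, y ∈ K →
      |f x - f y| ≤ ε ∧ ∀ N, ∀ i ∈ S N, |u i x - u i y| ≤ ε)
    {ε : ℝ} (hε : 0 < ε) : ∀ᶠ N in l, ∀ x ∈ K, ∀ i ∈ S N, |u i x - f x| ≤ ε := by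
  have hε3 : 0 < ε / 3 := by positivity
  have hprod : ∀ᶠ q in l ×ˢ 𝓝ˢ K, q.2 ∈ K → ∀ i ∈ S q.1, |u i q.2 - f q.2| ≤ ε := by
    refine hK.mem_prod_nhdsSet_of_forall fun x hx => ?_
    filter_upwards [prod_mem_prod (hpt x hx _ hε3) (hequi x hx _ hε3)]
    rintro ⟨N, y⟩ ⟨hN, hy⟩ hyK i hi
    obtain ⟨hfy, huy⟩ := hy hyK
    calc |u i y - f y| ≤ |u i x - u i y| + |u i x - f x| + |f x - f y| := by
          rw [abs_sub_comm (u i x)]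
          linarith [abs_sub_le (u i y) (u i x) (f x), abs_sub_le (u i y) (f x) (f y)]
      _ ≤ ε / 3 + ε / 3 + ε / 3 := by gcongr; exacts [huy N i hi, hN i hi]
      _ = ε := by ring
  exact Filter.Eventually.curry hprod |>.mono fun N hN x hx => hN.self_of_nhdsSet x hx hx

lemma eventually_forall_mem_abs_sub_le_of_forall_tendsto {ι β : Type*} {l : Filter β}
    {S : β → Set ι} (hS : ∀ N, (S N).Nonempty) {u : ι → ℝ} {a : ℝ}
    (h : ∀ G : β → ι, (∀ N, G N ∈ S N) → Tendsto (fun N => u (G N)) l (𝓝 a))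
    {ε : ℝ} (hε : 0 < ε) : ∀ᶠ N in l, ∀ i ∈ S N, |u i - a| ≤ ε := by
  have hbad : ∀ N, ∃ G ∈ S N, (∃ i ∈ S N, ε < |u i - a|) → ε < |u G - a| := by
    intro N
    by_cases hN : ∃ i ∈ S N, ε < |u i - a|
    · obtain ⟨i, hi, hia⟩ := hN
      exact ⟨i, hi, fun _ => hia⟩
    · obtain ⟨i, hi⟩ := hS N
      exact ⟨i, hi, fun h' => absurd h' hN⟩
  choose G hGS hG using hbad
  filter_upwards [Metric.tendsto_nhds.1 (h G hGS) ε hε] with N hN i hi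
  by_contra hi'
  exact (hG N ⟨i, hi, not_le.1 hi'⟩).not_gt hN

section Equicontinuous

variable {V E : Type*} [SeminormedAddCommGroup V] [MeasurableSpace E] {X : Set V} {Ξ : Set E}
  {c : V → E → ℝ}

lemma eventually_abs_integral_sub_integral_le
    (hequi : ∀ x ∈ X, ∀ ε > (0 : ℝ), ∃ δ > (0 : ℝ), ∀ x' ∈ X, ‖x - x'‖ < δ →
      ∀ ζ ∈ Ξ, |c x ζ - c x' ζ| < ε)
    {x : V} (hx : x ∈ X) {ε : ℝ} (hε : 0 < ε) :
    ∀ᶠ y in 𝓝 x, y ∈ X → ∀ G : ProbabilityMeasure E, G.toMeasure Ξᶜ = 0 →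
      Integrable (c x) G.toMeasure → Integrable (c y) G.toMeasure →
      |∫ ζ, c x ζ ∂G.toMeasure - ∫ ζ, c y ζ ∂G.toMeasure| ≤ ε := by
  obtain ⟨δ, hδ, hxδ⟩ := hequi x hx ε hε
  filter_upwards [Metric.ball_mem_nhds x hδ] with y hy hyX G hGΞ hGx hGy
  rw [Metric.mem_ball, dist_comm, dist_eq_norm] at hy
  exact abs_integral_sub_integral_le hGΞ hGx hGy fun ζ hζ => (hxδ y hyX hy ζ hζ).le

lemma continuousOn_integral_of_equicontinuous
    (hequi : ∀ x ∈ X, ∀ ε > (0 : ℝ), ∃ δ > (0 : ℝ), ∀ x' ∈ X, ‖x - x'‖ < δ →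
      ∀ ζ ∈ Ξ, |c x ζ - c x' ζ| < ε)
    {F : ProbabilityMeasure E} (hFΞ : F.toMeasure Ξᶜ = 0)
    (hFint : ∀ x ∈ X, Integrable (c x) F.toMeasure) :
    ContinuousOn (fun x => ∫ ζ, c x ζ ∂F.toMeasure) X := fun x hx =>
  Metric.tendsto_nhds.2 fun ε hε => by
    filter_upwards [eventually_nhdsWithin_of_eventually_nhds
      (eventually_abs_integral_sub_integral_le hequi hx (half_pos hε)), self_mem_nhdsWithin]
      with y hy hyX
    rw [Real.dist_eq, abs_sub_comm]
    exact (hy hyX F hFΞ (hFint x hx) (hFint y hyX)).trans_lt (half_lt_self hε)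

end Equicontinuous

lemma tendstoUniformlyOnEReal_worstCaseP {d dx : ℕ} {X L : Set (EuclideanSpace ℝ (Fin dx))}
    (hL : IsCompact L) (hLX : L ⊆ X) {Ξ : Set (EuclideanSpace ℝ (Fin d))}
    {c : EuclideanSpace ℝ (Fin dx) → EuclideanSpace ℝ (Fin d) → ℝ}
    (hequi : ∀ x ∈ X, ∀ ε > (0 : ℝ), ∃ δ > (0 : ℝ), ∀ x' ∈ X, ‖x - x'‖ < δ →
      ∀ ζ ∈ Ξ, |c x ζ - c x' ζ| < ε)
    {F : ProbabilityMeasure (EuclideanSpace ℝ (Fin d))} (hFΞ : F.toMeasure Ξᶜ = 0)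
    (hFint : ∀ x ∈ X, Integrable (c x) F.toMeasure)
    {𝓖 : ℕ → Set (ProbabilityMeasure (EuclideanSpace ℝ (Fin d)))} (h𝓖ne : ∀ N, (𝓖 N).Nonempty)
    (h𝓖Ξ : ∀ N, ∀ G ∈ 𝓖 N, G.toMeasure Ξᶜ = 0)
    (h𝓖int : ∀ N, ∀ G ∈ 𝓖 N, ∀ x ∈ X, Integrable (c x) G.toMeasure)
    (hsel : ∀ G : ℕ → ProbabilityMeasure (EuclideanSpace ℝ (Fin d)), (∀ N, G N ∈ 𝓖 N) →
      ∀ x ∈ X, Tendsto (fun N => ∫ ζ, c x ζ ∂(G N).toMeasure) atTop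
        (𝓝 (∫ ζ, c x ζ ∂F.toMeasure))) :
    TendstoUniformlyOnEReal (fun N => worstCaseP c (𝓖 N))
      (fun x => ∫ ζ, c x ζ ∂F.toMeasure) L := by
  intro ε hε
  have hpt : ∀ x ∈ L, ∀ ε > (0 : ℝ), ∀ᶠ N in atTop, ∀ G ∈ 𝓖 N,
      |∫ ζ, c x ζ ∂G.toMeasure - ∫ ζ, c x ζ ∂F.toMeasure| ≤ ε := fun x hx ε hε =>
    eventually_forall_mem_abs_sub_le_of_forall_tendsto h𝓖ne (fun G hG => hsel G hG x (hLX hx)) hε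
  have hequiL : ∀ x ∈ L, ∀ ε > (0 : ℝ), ∀ᶠ y in 𝓝 x, y ∈ L →
      |∫ ζ, c x ζ ∂F.toMeasure - ∫ ζ, c y ζ ∂F.toMeasure| ≤ ε ∧
      ∀ N, ∀ G ∈ 𝓖 N, |∫ ζ, c x ζ ∂G.toMeasure - ∫ ζ, c y ζ ∂G.toMeasure| ≤ ε := by
    intro x hx ε hε
    filter_upwards [eventually_abs_integral_sub_integral_le hequi (hLX hx) hε] with y hy hyL
    exact ⟨hy (hLX hyL) F hFΞ (hFint x (hLX hx)) (hFint y (hLX hyL)), fun N G hG =>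
      hy (hLX hyL) G (h𝓖Ξ N G hG) (h𝓖int N G hG x (hLX hx)) (h𝓖int N G hG y (hLX hyL))⟩
  filter_upwards [hL.eventually_forall_abs_sub_le hpt hequiL hε] with N hN x hx
  exact worstCaseP_mem_Icc (h𝓖ne N) (hN x hx)

section Minimizers

variable {α : Type*}

def MinimizersConfined (X K : Set α) (f : α → ℝ) (W : ℕ → α → EReal) (b : ℝ) : Prop :=
  (∃ x ∈ K, f x < b) ∧ (∀ x ∈ X \ K, b ≤ f x) ∧
    ∀ᶠ N in atTop, ∀ x ∈ X \ K, (b : EReal) ≤ W N x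

lemma minimizersConfined_self {X : Set α} {x₀ : α} (hx₀ : x₀ ∈ X) (f : α → ℝ)
    (W : ℕ → α → EReal) : MinimizersConfined X X f W (f x₀ + 1) :=
  ⟨⟨x₀, hx₀, lt_add_one _⟩, by simp, by simp⟩

namespace MinimizersConfined

variable [TopologicalSpace α] {X K : Set α} {f : α → ℝ} {W : ℕ → α → EReal} {b : ℝ}

lemma exists_isMinOn (h : MinimizersConfined X K f W b) (hK : IsCompact K)
    (hf : ContinuousOn f K) : ∃ x ∈ K, IsMinOn f X x ∧ f x < b := by
  obtain ⟨⟨x₀, hx₀, hx₀b⟩, hfb, -⟩ := h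
  obtain ⟨x, hx, hmin⟩ := hK.exists_isMinOn ⟨x₀, hx₀⟩ hf
  have hxb : f x < b := (hmin hx₀).trans_lt hx₀b
  refine ⟨x, hx, fun y hy => ?_, hxb⟩
  by_cases hyK : y ∈ K
  · exact hmin hyK
  · exact hxb.le.trans (hfb y ⟨hy, hyK⟩)

lemma tendsto_iInf (h : MinimizersConfined X K f W b) (hK : IsCompact K) (hKX : K ⊆ X)
    (hf : ContinuousOn f K) (hW : TendstoUniformlyOnEReal W f K) :
    Tendsto (fun N => ⨅ x ∈ X, W N x) atTop (𝓝 (⨅ x ∈ X, (f x : EReal))) := by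
  obtain ⟨x₀, hx₀, hmin, hx₀b⟩ := h.exists_isMinOn hK hf
  have hinf : ⨅ x ∈ X, (f x : EReal) = f x₀ :=
    le_antisymm (iInf₂_le x₀ (hKX hx₀)) (le_iInf₂ fun x hx => EReal.coe_le_coe_iff.2 (hmin hx))
  rw [hinf]
  refine EReal.tendsto_coe_of_forall_pos fun ε hε => ?_
  filter_upwards [hW ε hε, h.2.2] with N hWN hout
  refine ⟨le_iInf₂ fun x hx => ?_, iInf₂_le_of_le x₀ (hKX hx₀) (hWN x₀ hx₀).2⟩
  by_cases hxK : x ∈ K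
  · exact (EReal.coe_le_coe_iff.2 (by linarith [isMinOn_iff.1 hmin x hx])).trans (hWN x hxK).1
  · exact (EReal.coe_le_coe_iff.2 (by linarith)).trans (hout x ⟨hx, hxK⟩)

lemma eventually_mem (h : MinimizersConfined X K f W b) (hK : IsCompact K) (hKX : K ⊆ X)
    (hf : ContinuousOn f K) (hW : TendstoUniformlyOnEReal W f K) {xs : ℕ → α}
    (hxs : ∀ N, xs N ∈ X ∧ ∀ y ∈ X, W N (xs N) ≤ W N y) :
    ∀ᶠ N in atTop, xs N ∈ K := by
  obtain ⟨x₀, hx₀, -, hx₀b⟩ := h.exists_isMinOn hK hf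
  filter_upwards [hW _ (half_pos (sub_pos.2 hx₀b)), h.2.2] with N hWN hout
  by_contra hN
  have := EReal.coe_le_coe_iff.1 <|
    ((hout _ ⟨(hxs N).1, hN⟩).trans ((hxs N).2 x₀ (hKX hx₀))).trans (hWN x₀ hx₀).2
  linarith

lemma mem_and_le_of_mapClusterPt (h : MinimizersConfined X K f W b) (hX : IsClosed X)
    (hK : IsCompact K) (hKX : K ⊆ X) (hf : ContinuousOn f X)
    (hW : ∀ L ⊆ X, IsCompact L → TendstoUniformlyOnEReal W f L) {xs : ℕ → α}
    (hxs : ∀ N, xs N ∈ X ∧ ∀ y ∈ X, W N (xs N) ≤ W N y) {p : α} (hp : MapClusterPt p atTop xs) :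
    p ∈ X ∧ ∀ y ∈ X, f p ≤ f y := by
  refine ⟨hX.mem_of_mapClusterPt hp (.of_forall fun N => (hxs N).1), fun y hy => ?_⟩
  refine le_of_forall_pos_le_add fun ε hε => ?_
  have hsub : IsClosed (X ∩ f ⁻¹' Set.Iic (f y + ε)) :=
    hf.preimage_isClosed_of_isClosed hX isClosed_Iic
  refine (hsub.mem_of_mapClusterPt hp ?_).2
  filter_upwards [h.eventually_mem hK hKX (hf.mono hKX) (hW K hKX hK) hxs,
    hW K hKX hK _ (half_pos hε),
    hW {y} (Set.singleton_subset_iff.2 hy) isCompact_singleton _ (half_pos hε)] with N hN hWK hWy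
  have := EReal.coe_le_coe_iff.1 <|
    ((hWK _ hN).1.trans ((hxs N).2 y hy)).trans (hWy y rfl).2
  exact ⟨(hxs N).1, by simp only [Set.mem_preimage, Set.mem_Iic]; linarith⟩

end MinimizersConfined

end Minimizers

lemma exists_radius_le_integral {V E : Type*} [Norm V] [MeasurableSpace E] {X : Set V}
    {Ξ D : Set E} (hD : MeasurableSet D) {c : V → E → ℝ}
    (hcD : ∀ M : ℝ, ∃ R : ℝ, ∀ x ∈ X, R ≤ ‖x‖ → ∀ ζ ∈ D, M ≤ c x ζ)
    {m R₀ : ℝ} (hcΞ : ∀ x ∈ X, R₀ ≤ ‖x‖ → ∀ ζ ∈ Ξ \ D, m ≤ c x ζ) {β : ℝ} (hβ : 0 < β) (b : ℝ) :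
    ∃ R : ℝ, ∀ x ∈ X, R ≤ ‖x‖ → ∀ G : ProbabilityMeasure E, G.toMeasure Ξᶜ = 0 →
      Integrable (c x) G.toMeasure → β ≤ G.toMeasure.real D → b ≤ ∫ ζ, c x ζ ∂G.toMeasure := by
  set M := m + max (b - m) 0 / β
  have hmM : m ≤ M := le_add_of_nonneg_right (by positivity)
  obtain ⟨R, hR⟩ := hcD M
  refine ⟨max R R₀, fun x hx hxR G hGΞ hint hGD => ?_⟩
  calc b ≤ m + (M - m) * β := by
        rw [add_sub_cancel_left, div_mul_cancel₀ _ hβ.ne']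
        linarith [le_max_left (b - m) 0]
    _ ≤ ∫ ζ, c x ζ ∂G.toMeasure :=
        add_mul_le_integral hGΞ hD hint hmM hGD (hR x hx ((le_max_left _ _).trans hxR))
          (hcΞ x hx ((le_max_right _ _).trans hxR))

lemma minimizersConfined_of_coercive {d dx : ℕ} {Ξ D : Set (EuclideanSpace ℝ (Fin d))}
    (hD : MeasurableSet D) {X : Set (EuclideanSpace ℝ (Fin dx))} (hX : IsClosed X)
    {x₀ : EuclideanSpace ℝ (Fin dx)} (hx₀ : x₀ ∈ X)
    {c : EuclideanSpace ℝ (Fin dx) → EuclideanSpace ℝ (Fin d) → ℝ}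
    (hcD : ∀ M : ℝ, ∃ R : ℝ, ∀ x ∈ X, R ≤ ‖x‖ → ∀ ζ ∈ D, M ≤ c x ζ)
    {m R₀ : ℝ} (hcΞ : ∀ x ∈ X, R₀ ≤ ‖x‖ → ∀ ζ ∈ Ξ \ D, m ≤ c x ζ)
    {F : ProbabilityMeasure (EuclideanSpace ℝ (Fin d))} (hFΞ : F.toMeasure Ξᶜ = 0)
    (hFD : 0 < F.toMeasure D) (hFint : ∀ x ∈ X, Integrable (c x) F.toMeasure)
    {𝓖 : ℕ → Set (ProbabilityMeasure (EuclideanSpace ℝ (Fin d)))}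
    (h𝓖Ξ : ∀ N, ∀ G ∈ 𝓖 N, G.toMeasure Ξᶜ = 0)
    (h𝓖int : ∀ N, ∀ G ∈ 𝓖 N, ∀ x ∈ X, Integrable (c x) G.toMeasure)
    {ξs : ℕ → EuclideanSpace ℝ (Fin d)}
    (hemp : ∀ N : ℕ, 0 < N → ∃ G ∈ 𝓖 N, G.toMeasure = empiricalMeasure N ξs)
    (hfreq : Tendsto (fun N => (empiricalMeasure N ξs).real D) atTop
      (𝓝 (F.toMeasure.real D))) :
    ∃ K ⊆ X, IsCompact K ∧ ∃ b, MinimizersConfined X K (fun x => ∫ ζ, c x ζ ∂F.toMeasure)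
      (fun N => worstCaseP c (𝓖 N)) b := by
  set f := fun x => ∫ ζ, c x ζ ∂F.toMeasure
  have hα : 0 < F.toMeasure.real D := ENNReal.toReal_pos hFD.ne' (measure_ne_top _ _)
  obtain ⟨R, hR⟩ := exists_radius_le_integral hD hcD hcΞ (half_pos hα) (f x₀ + 1)
  set K := X ∩ Metric.closedBall 0 (max R ‖x₀‖)
  have hfar : ∀ x ∈ X \ K, R ≤ ‖x‖ := fun x hx =>
    (le_max_left _ _).trans (not_le.1 fun h => hx.2 ⟨hx.1, mem_closedBall_zero_iff.2 h⟩).le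
  refine ⟨K, Set.inter_subset_left, (isCompact_closedBall _ _).inter_left hX, f x₀ + 1,
    ⟨x₀, ⟨hx₀, mem_closedBall_zero_iff.2 (le_max_right _ _)⟩, lt_add_one _⟩,
    fun x hx => hR x hx.1 (hfar x hx) F hFΞ (hFint x hx.1) (half_le_self hα.le), ?_⟩
  filter_upwards [hfreq.eventually (eventually_ge_nhds (half_lt_self hα)),
    eventually_gt_atTop 0] with N hN hNpos x hx
  obtain ⟨G, hG, hGemp⟩ := hemp N hNpos
  refine (EReal.coe_le_coe_iff.2 ?_).trans (integral_le_worstCaseP hG)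
  refine hR x hx.1 (hfar x hx) G (h𝓖Ξ N G hG) (h𝓖int N G hG x hx.1) ?_
  rwa [hGemp]

theorem stmt7_general {d dx : ℕ} {Ω : Type*} [MeasurableSpace Ω]
    (P : Measure Ω)
    (Ξ : Set (EuclideanSpace ℝ (Fin d)))
    (X : Set (EuclideanSpace ℝ (Fin dx))) (hXne : X.Nonempty) (hXcl : IsClosed X)
    (F : ProbabilityMeasure (EuclideanSpace ℝ (Fin d))) (hFsupp : F.toMeasure Ξᶜ = 0)
    -- i.i.d. data drawn from `F`
    (ξ : ℕ → Ω → EuclideanSpace ℝ (Fin d)) (hξmeas : ∀ i, Measurable (ξ i))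
    (hiid : ProbabilityTheory.iIndepFun ξ P)
    (hdist : ∀ i, Measure.map (ξ i) P = F.toMeasure)
    -- the data-dependent confidence regions
    (𝓕 : ℕ → Ω → Set (ProbabilityMeasure (EuclideanSpace ℝ (Fin d))))
    (h𝓕ne : ∀ N ω, (𝓕 N ω).Nonempty)
    (h𝓕supp : ∀ N ω, ∀ G ∈ 𝓕 N ω, G.toMeasure Ξᶜ = 0)
    -- the cost function
    (c : EuclideanSpace ℝ (Fin dx) → EuclideanSpace ℝ (Fin d) → ℝ)
    -- (i) c-consistency, and the regions contain the empirical distribution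
    (hCC : ∀ᵐ ω ∂P, ∀ G : ℕ → ProbabilityMeasure (EuclideanSpace ℝ (Fin d)),
      (∀ N, (G N).toMeasure Ξᶜ = 0) →
      ¬ (∀ x ∈ X, Tendsto (fun N => ∫ ζ, c x ζ ∂(G N).toMeasure) atTop
          (𝓝 (∫ ζ, c x ζ ∂F.toMeasure))) →
        ∃ᶠ N in atTop, G N ∉ 𝓕 N ω)
    (hemp : ∀ᵐ ω ∂P, ∀ N : ℕ, 0 < N →
      ∃ G ∈ 𝓕 N ω, G.toMeasure = empiricalMeasure N (fun i => ξ i ω))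
    -- (ii) equicontinuity in `x`, continuity in `ξ`, integrability
    (hequi : ∀ x ∈ X, ∀ ε > (0:ℝ), ∃ δ > (0:ℝ), ∀ x' ∈ X, ‖x - x'‖ < δ →
      ∀ ζ ∈ Ξ, |c x ζ - c x' ζ| < ε)
    (hFint : ∀ x ∈ X, Integrable (c x) F.toMeasure)
    (h𝓕int : ∀ N ω, ∀ G ∈ 𝓕 N ω, ∀ x ∈ X, Integrable (c x) G.toMeasure)
    -- (iii) `X` bounded, or coercivity
    (hcoerc : Bornology.IsBounded X ∨
      ∃ D : Set (EuclideanSpace ℝ (Fin d)), MeasurableSet D ∧ D ⊆ Ξ ∧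
        0 < F.toMeasure D ∧
        (∀ M : ℝ, ∃ R : ℝ, ∀ x ∈ X, R ≤ ‖x‖ → ∀ ζ ∈ D, M ≤ c x ζ) ∧
        (∃ m R : ℝ, ∀ x ∈ X, R ≤ ‖x‖ → ∀ ζ ∈ Ξ \ D, m ≤ c x ζ)) :
    ∀ᵐ ω ∂P,
      -- (1) uniform convergence of the objective on compact subsets of `X`
      (∀ K ⊆ X, IsCompact K → ∀ ε > (0:ℝ), ∀ᶠ N in atTop, ∀ x ∈ K,
        (((∫ ζ, c x ζ ∂F.toMeasure) - ε : ℝ) : EReal) ≤ worstCaseP c (𝓕 N ω) x ∧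
          worstCaseP c (𝓕 N ω) x ≤ (((∫ ζ, c x ζ ∂F.toMeasure) + ε : ℝ) : EReal)) ∧
      -- (2) convergence of optimal values
      Tendsto (fun N => ⨅ x ∈ X, worstCaseP c (𝓕 N ω) x) atTop
        (𝓝 (⨅ x ∈ X, ((∫ ζ, c x ζ ∂F.toMeasure : ℝ) : EReal))) ∧
      -- (3) convergence of optimal solutions
      (∀ xseq : ℕ → EuclideanSpace ℝ (Fin dx),
        (∀ N, xseq N ∈ X ∧ ∀ y ∈ X, worstCaseP c (𝓕 N ω) (xseq N) ≤ worstCaseP c (𝓕 N ω) y) →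
        (∃ p, MapClusterPt p atTop xseq) ∧
        (∀ p, MapClusterPt p atTop xseq → p ∈ X ∧
          ∀ y ∈ X, ∫ ζ, c p ζ ∂F.toMeasure ≤ ∫ ζ, c y ζ ∂F.toMeasure)) := by
  set f := fun x => ∫ ζ, c x ζ ∂F.toMeasure
  have hfcont : ContinuousOn f X := continuousOn_integral_of_equicontinuous hequi hFsupp hFint
  have hconf : ∀ᵐ ω ∂P, ∃ K ⊆ X, IsCompact K ∧ ∃ b,
      MinimizersConfined X K f (fun N => worstCaseP c (𝓕 N ω)) b := by
    obtain ⟨x₀, hx₀⟩ := hXne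
    rcases hcoerc with hXbd | ⟨D, hD, -, hFD, hcD, m, R₀, hcΞ⟩
    · exact ae_of_all _ fun ω => ⟨X, subset_rfl,
        Metric.isCompact_of_isClosed_isBounded hXcl hXbd, _, minimizersConfined_self hx₀ _ _⟩
    · filter_upwards [hemp, ae_tendsto_empiricalMeasure_real hξmeas hiid hdist hD]
        with ω hempω hfreq
      exact minimizersConfined_of_coercive hD hXcl hx₀ hcD hcΞ hFsupp hFD hFint
        (h𝓕supp · ω) (h𝓕int · ω) hempω hfreq
  filter_upwards [hCC, hconf] with ω hccω ⟨K, hKX, hK, b, hKb⟩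
  have hsel : ∀ G : ℕ → ProbabilityMeasure (EuclideanSpace ℝ (Fin d)), (∀ N, G N ∈ 𝓕 N ω) →
      ∀ x ∈ X, Tendsto (fun N => ∫ ζ, c x ζ ∂(G N).toMeasure) atTop (𝓝 (f x)) :=
    fun G hG => not_not.1 fun hdiv =>
      (hccω G (fun N => h𝓕supp N ω _ (hG N)) hdiv).exists.elim fun N hN => hN (hG N)
  have hunif : ∀ L ⊆ X, IsCompact L →
      TendstoUniformlyOnEReal (fun N => worstCaseP c (𝓕 N ω)) f L := fun L hLX hL =>
    tendstoUniformlyOnEReal_worstCaseP hL hLX hequi hFsupp hFint (h𝓕ne · ω) (h𝓕supp · ω)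
      (h𝓕int · ω) hsel
  refine ⟨hunif, hKb.tendsto_iInf hK hKX (hfcont.mono hKX) (hunif K hKX hK), fun xs hxs => ?_⟩
  obtain ⟨p, -, hp⟩ := hK.exists_mapClusterPt (le_principal_iff.2
    (hKb.eventually_mem hK hKX (hfcont.mono hKX) (hunif K hKX hK) hxs))
  exact ⟨⟨p, hp⟩, fun p hp => hKb.mem_and_le_of_mapClusterPt hXcl hK hKX hfcont hunif hxs hp⟩

/-- c-consistency implies convergence of Robust SAA:
objective functions, optimal values, and optimal solutions.
Under (i) c-consistency of the test with confidence regions `𝓕 N ω`, which almost surely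
contain the empirical distribution, (ii) equicontinuity in `x` and continuity and
integrability in `ξ` of the cost, (iii) closedness of `X` together with boundedness or a
coercivity condition, and (iv) boundedness of `Ξ` or a uniformly-controlled growth
function `φ`, almost surely:
(1) `C(·;𝓕_N) → E_F[c(·;ξ)]` uniformly on compact subsets of `X`;
(2) `inf_{x∈X} C(x;𝓕_N) → inf_{x∈X} E_F[c(x;ξ)]`;
(3) every sequence of robust minimizers has a limit point, and all its limit points
minimize `E_F[c(x;ξ)]` over `X`. -/
theorem stmt7 {d dx : ℕ} {Ω : Type*} [MeasurableSpace Ω]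
    (P : Measure Ω) [IsProbabilityMeasure P]
    (Ξ : Set (EuclideanSpace ℝ (Fin d))) (hΞ : IsClosed Ξ)
    (X : Set (EuclideanSpace ℝ (Fin dx))) (hXne : X.Nonempty) (hXcl : IsClosed X)
    (F : ProbabilityMeasure (EuclideanSpace ℝ (Fin d))) (hFsupp : F.toMeasure Ξᶜ = 0)
    -- i.i.d. data drawn from `F`
    (ξ : ℕ → Ω → EuclideanSpace ℝ (Fin d)) (hξmeas : ∀ i, Measurable (ξ i))
    (hiid : ProbabilityTheory.iIndepFun ξ P)
    (hdist : ∀ i, Measure.map (ξ i) P = F.toMeasure)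
    -- the data-dependent confidence regions
    (𝓕 : ℕ → Ω → Set (ProbabilityMeasure (EuclideanSpace ℝ (Fin d))))
    (h𝓕ne : ∀ N ω, (𝓕 N ω).Nonempty)
    (h𝓕supp : ∀ N ω, ∀ G ∈ 𝓕 N ω, G.toMeasure Ξᶜ = 0)
    -- the cost function
    (c : EuclideanSpace ℝ (Fin dx) → EuclideanSpace ℝ (Fin d) → ℝ)
    (hcmeas : ∀ x ∈ X, Measurable (c x))
    -- (i) c-consistency, and the regions contain the empirical distribution
    (hCC : ∀ᵐ ω ∂P, ∀ G : ℕ → ProbabilityMeasure (EuclideanSpace ℝ (Fin d)),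
      (∀ N, (G N).toMeasure Ξᶜ = 0) →
      ¬ (∀ x ∈ X, Tendsto (fun N => ∫ ζ, c x ζ ∂(G N).toMeasure) atTop
          (𝓝 (∫ ζ, c x ζ ∂F.toMeasure))) →
        ∃ᶠ N in atTop, G N ∉ 𝓕 N ω)
    (hemp : ∀ᵐ ω ∂P, ∀ N : ℕ, 0 < N →
      ∃ G ∈ 𝓕 N ω, G.toMeasure = empiricalMeasure N (fun i => ξ i ω))
    -- (ii) equicontinuity in `x`, continuity in `ξ`, integrability
    (hequi : ∀ x ∈ X, ∀ ε > (0:ℝ), ∃ δ > (0:ℝ), ∀ x' ∈ X, ‖x - x'‖ < δ →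
      ∀ ζ ∈ Ξ, |c x ζ - c x' ζ| < ε)
    (hcont : ∀ x ∈ X, ContinuousOn (c x) Ξ)
    (hFint : ∀ x ∈ X, Integrable (c x) F.toMeasure)
    (h𝓕int : ∀ N ω, ∀ G ∈ 𝓕 N ω, ∀ x ∈ X, Integrable (c x) G.toMeasure)
    -- (iii) `X` bounded, or coercivity
    (hcoerc : Bornology.IsBounded X ∨
      ∃ D : Set (EuclideanSpace ℝ (Fin d)), MeasurableSet D ∧ D ⊆ Ξ ∧
        0 < F.toMeasure D ∧
        (∀ M : ℝ, ∃ R : ℝ, ∀ x ∈ X, R ≤ ‖x‖ → ∀ ζ ∈ D, M ≤ c x ζ) ∧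
        (∃ m R : ℝ, ∀ x ∈ X, R ≤ ‖x‖ → ∀ ζ ∈ Ξ \ D, m ≤ c x ζ))
    -- (iv) `Ξ` bounded, or growth control via `φ`
    (hgrow : Bornology.IsBounded Ξ ∨
      ∃ φ : EuclideanSpace ℝ (Fin d) → ℝ, ContinuousOn φ Ξ ∧ (∀ ζ ∈ Ξ, 0 ≤ φ ζ) ∧
        Integrable φ F.toMeasure ∧
        (∀ N ω, ∀ G ∈ 𝓕 N ω, Integrable φ G.toMeasure) ∧
        (∀ᵐ ω ∂P, ∀ ε > (0:ℝ), ∀ᶠ N in atTop, ∀ G ∈ 𝓕 N ω,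
          |∫ ζ, φ ζ ∂G.toMeasure - (∑ i ∈ Finset.range N, φ (ξ i ω)) / N| ≤ ε) ∧
        (∀ x ∈ X, ∃ ν η : ℝ, ∀ ζ ∈ Ξ, |c x ζ| ≤ ν + η * φ ζ)) :
    ∀ᵐ ω ∂P,
      -- (1) uniform convergence of the objective on compact subsets of `X`
      (∀ K ⊆ X, IsCompact K → ∀ ε > (0:ℝ), ∀ᶠ N in atTop, ∀ x ∈ K,
        (((∫ ζ, c x ζ ∂F.toMeasure) - ε : ℝ) : EReal) ≤ worstCaseP c (𝓕 N ω) x ∧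
          worstCaseP c (𝓕 N ω) x ≤ (((∫ ζ, c x ζ ∂F.toMeasure) + ε : ℝ) : EReal)) ∧
      -- (2) convergence of optimal values
      Tendsto (fun N => ⨅ x ∈ X, worstCaseP c (𝓕 N ω) x) atTop
        (𝓝 (⨅ x ∈ X, ((∫ ζ, c x ζ ∂F.toMeasure : ℝ) : EReal))) ∧
      -- (3) convergence of optimal solutions
      (∀ xseq : ℕ → EuclideanSpace ℝ (Fin dx),
        (∀ N, xseq N ∈ X ∧ ∀ y ∈ X, worstCaseP c (𝓕 N ω) (xseq N) ≤ worstCaseP c (𝓕 N ω) y) →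
        (∃ p, MapClusterPt p atTop xseq) ∧
        (∀ p, MapClusterPt p atTop xseq → p ∈ X ∧
          ∀ y ∈ X, ∫ ζ, c p ζ ∂F.toMeasure ≤ ∫ ζ, c y ζ ∂F.toMeasure)) :=
  stmt7_general P Ξ X hXne hXcl F hFsupp ξ hξmeas hiid hdist 𝓕 h𝓕ne h𝓕supp c hCC hemp hequi hFint
    h𝓕int hcoerc
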